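/- If a graph Γ is arc-transitive, then every lobe of Γ is arc-transitive. -/

import Mathlib

open SimpleGraph

variable {V : Type*}

/-- Two edges are related iff equal or they lie on a common cycle. -/
def EdgeRel (G : SimpleGraph V) (e₁ e₂ : Sym2 V) : Prop :=
  e₁ = e₂ ∨ ∃ (v : V) (c : G.Walk v v), c.IsCycle ∧ e₁ ∈ c.edges ∧ e₂ ∈ c.edges

/-- The set of edges in the lobe of `e`. -/
def lobeEdges (G : SimpleGraph V) (e : Sym2 V) : Set (Sym2 V) :=
  {f | f ∈ G.edgeSet ∧ EdgeRel G e f}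

/-- The lobe of an edge `e`, as a subgraph. -/
def lobeSubgraph (G : SimpleGraph V) (e : Sym2 V) : G.Subgraph where
  verts := {v | ∃ f ∈ lobeEdges G e, v ∈ f}
  Adj u w := G.Adj u w ∧ EdgeRel G e s(u, w)
  adj_sub h := h.1
  edge_vert h := ⟨_, ⟨h.1, h.2⟩, Sym2.mem_mk_left _ _⟩
  symm := ⟨fun u w h => ⟨h.1.symm, by rw [Sym2.eq_swap]; exact h.2⟩⟩

/-- `Aut(G)` acts transitively on edges. -/
def EdgeTransitive (G : SimpleGraph V) : Prop :=
  ∀ e₁ ∈ G.edgeSet, ∀ e₂ ∈ G.edgeSet, ∃ φ : G ≃g G, Sym2.map ⇑φ e₁ = e₂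

/-- `Aut(G)` acts transitively on vertices. -/
def VertexTransitive (G : SimpleGraph V) : Prop :=
  ∀ u v : V, ∃ φ : G ≃g G, φ u = v

/-- `Aut(G)` acts transitively on arcs (ordered pairs of adjacent vertices). -/
def ArcTransitive (G : SimpleGraph V) : Prop :=
  ∀ u₁ v₁ u₂ v₂ : V, G.Adj u₁ v₁ → G.Adj u₂ v₂ →
    ∃ φ : G ≃g G, φ u₁ = u₂ ∧ φ v₁ = v₂

/-- `G` has a cut vertex: a vertex whose removal disconnects the graph. -/
def HasCutVertex (G : SimpleGraph V) : Prop :=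
  ∃ v : V, ¬ (G.induce {w | w ≠ v}).Connected

/-- `G` has connectivity 1: connected with a cut vertex. -/
def ConnOne (G : SimpleGraph V) : Prop := G.Connected ∧ HasCutVertex G

/-- The set of lobes (as edge-classes) containing the vertex `v`. -/
def lobesAt (G : SimpleGraph V) (v : V) : Set (Set (Sym2 V)) :=
  {L | (∃ e ∈ G.edgeSet, L = lobeEdges G e) ∧ ∃ f ∈ L, v ∈ f}

section Aux
variable {G : SimpleGraph V}

private lemma sym2_pair (s : Sym2 V) : ∃ x y, s = s(x, y) :=
  Sym2.ind (fun x y => ⟨x, y, rfl⟩) s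

private lemma end_mem_support_tail {u v : V} (p : G.Walk u v) (h : ¬ p.Nil) :
    v ∈ p.support.tail := by
  cases p with
  | nil => simp at h
  | cons h q => simpa using q.end_mem_support

/-- In a path ending at `x`, an edge `s(x,y)` must be the last edge. -/
private lemma exists_eq_append_of_edge_end :
    ∀ {z x y : V} (p : G.Walk z x), p.IsPath → s(x, y) ∈ p.edges →
      ∃ (q : G.Walk z y) (h : G.Adj y x), p = q.append (Walk.cons h Walk.nil) := by
  intro z x y p
  induction p with
  | nil => simp
  | @cons z w x h' p' ih =>
    intro hp he
    rw [Walk.edges_cons, List.mem_cons] at he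
    have hp' : p'.IsPath := (Walk.cons_isPath_iff _ _).mp hp |>.1
    have hznot : z ∉ p'.support := ((Walk.cons_isPath_iff _ _).mp hp).2
    rcases he with he | he
    · rw [Sym2.eq_iff] at he
      rcases he with ⟨hxz, hyw⟩ | ⟨hxw, hyz⟩
      · exfalso; exact hznot (hxz ▸ p'.end_mem_support)
      · subst hxw; subst hyz
        have : p' = Walk.nil := Walk.isPath_iff_eq_nil |>.mp hp'
        subst this
        exact ⟨Walk.nil, h', by simp⟩
    · obtain ⟨q, hadj, rfl⟩ := ih hp' he
      exact ⟨Walk.cons h' q, hadj, by simp⟩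

/-- Removing an edge from a cycle leaves a path between its endpoints. -/
private lemma cycle_split {x y w : V} (D : G.Walk w w) (hD : D.IsCycle)
    (hg : s(x, y) ∈ D.edges) :
    ∃ q : G.Walk y x, q.IsPath ∧ s(x, y) ∉ q.edges ∧
      ∀ e', e' ∈ D.edges ↔ (e' = s(x, y) ∨ e' ∈ q.edges) := by
  classical
  have hx : x ∈ D.support := D.fst_mem_support_of_mem_edges hg
  have hrot : (D.rotate x hx).edges ~r D.edges := D.rotate_edges x hx
  have hmem : ∀ e', e' ∈ (D.rotate x hx).edges ↔ e' ∈ D.edges := fun e' => hrot.mem_iff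
  have hD₁ : (D.rotate x hx).IsCycle := hD.rotate hx
  obtain ⟨z, h1, p, hEq⟩ := Walk.not_nil_iff.mp hD₁.not_nil
  rw [hEq] at hD₁ hmem
  have hcyc := (Walk.cons_isCycle_iff p h1).mp hD₁
  have hp : p.IsPath := hcyc.1
  have hxz : s(x, z) ∉ p.edges := hcyc.2
  have hg₁ : s(x, y) ∈ (Walk.cons h1 p).edges := (hmem _).mpr hg
  rw [Walk.edges_cons, List.mem_cons] at hg₁
  by_cases hcase : s(x, y) = s(x, z)
  · have hyz : y = z := Sym2.congr_right.mp hcase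
    subst hyz
    refine ⟨p, hp, hcase ▸ hxz, fun e' => ?_⟩
    rw [← hmem e', Walk.edges_cons, List.mem_cons, hcase]
  · have hgp : s(x, y) ∈ p.edges := hg₁.resolve_left hcase
    obtain ⟨q', hadj, hpq⟩ := exists_eq_append_of_edge_end p hp hgp
    have hxq' : x ∉ q'.support := by
      have := hp.support_nodup
      rw [hpq, Walk.support_append] at this
      simp only [Walk.support_cons, Walk.support_nil, List.tail_cons] at this
      exact fun hmem' => (List.disjoint_of_nodup_append this) hmem' (by simp)
    have hq'path : q'.IsPath := by
      rw [hpq] at hp; exact hp.of_append_left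
    refine ⟨(Walk.cons h1 q').reverse, ?_, ?_, fun e' => ?_⟩
    · exact (hq'path.cons hxq').reverse
    · rw [Walk.edges_reverse, List.mem_reverse, Walk.edges_cons, List.mem_cons]
      rintro (hc | hc)
      · exact hcase hc
      · have : p.edges.Nodup := hp.edges_nodup
        rw [hpq, Walk.edges_append] at this
        exact (List.disjoint_of_nodup_append this) hc (by simp [Sym2.eq_swap])
    · rw [← hmem e']
      subst hpq
      have hyx : s(y, x) = s(x, y) := Sym2.eq_swap
      simp only [Walk.edges_cons, Walk.edges_reverse, Walk.edges_append, Walk.edges_nil,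
        List.mem_reverse, List.mem_cons, List.mem_append, List.not_mem_nil, or_false, hyx]
      tauto

/-- First vertex of a walk lying in a set `S`, together with the split. -/
private lemma exists_first_hit {u v : V} (S : Set V) :
    ∀ (q : G.Walk u v), (∃ w ∈ q.support, w ∈ S) →
      ∃ (a : V) (r₁ : G.Walk u a) (r₂ : G.Walk a v), a ∈ S ∧ q = r₁.append r₂ ∧
        ∀ w ∈ r₁.support, w ∈ S → w = a := by
  intro q
  induction q with
  | nil =>
    rintro ⟨w, hw, hwS⟩
    simp only [Walk.support_nil, List.mem_singleton] at hw
    subst hw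
    exact ⟨_, Walk.nil, Walk.nil, hwS, by simp, by simp⟩
  | @cons u z v h p ih =>
    rintro ⟨w, hw, hwS⟩
    by_cases huS : u ∈ S
    · exact ⟨u, Walk.nil, Walk.cons h p, huS, by simp, by simp⟩
    · have hw' : w ∈ p.support := by
        rcases (by simpa using hw : w = u ∨ w ∈ p.support) with rfl | hw'
        · exact absurd hwS huS
        · exact hw'
      obtain ⟨a, r₁, r₂, haS, rfl, hr₁⟩ := ih ⟨w, hw', hwS⟩
      refine ⟨a, Walk.cons h r₁, r₂, haS, by simp, ?_⟩
      intro w' hw' hw'S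
      rcases (by simpa using hw' : w' = u ∨ w' ∈ r₁.support) with rfl | hw''
      · exact absurd hw'S huS
      · exact hr₁ w' hw'' hw'S

/-- A path from `a` to `b` containing the edge `s(a,b)` is a single edge. -/
private lemma path_eq_single_edge :
    ∀ {a b : V} (p : G.Walk a b), p.IsPath → s(a, b) ∈ p.edges →
      ∃ h : G.Adj a b, p = Walk.cons h Walk.nil := by
  intro a b p hp he
  cases p with
  | nil => simp at he
  | @cons _ c _ h' p' =>
    rw [Walk.edges_cons, List.mem_cons] at he
    have hp' : p'.IsPath := ((Walk.cons_isPath_iff _ _).mp hp).1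
    have hanot : a ∉ p'.support := ((Walk.cons_isPath_iff _ _).mp hp).2
    rcases he with he | he
    · rw [Sym2.eq_iff] at he
      rcases he with ⟨-, hbc⟩ | ⟨hac, hba⟩
      · subst hbc
        have : p' = Walk.nil := Walk.isPath_iff_eq_nil.mp hp'
        subst this
        exact ⟨h', rfl⟩
      · exact absurd (hac ▸ rfl : a = c) (by rintro rfl; exact hanot (hba ▸ p'.end_mem_support))
    · exact absurd (p'.fst_mem_support_of_mem_edges he) hanot

/-- Gluing two internally disjoint edge-disjoint paths gives a cycle. -/
private lemma glue_cycle {a b : V} {p : G.Walk a b} {r : G.Walk b a}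
    (hp : p.IsPath) (hr : r.IsPath) (hab : a ≠ b)
    (hdisj : ∀ w ∈ p.support, w ∈ r.support → w = a ∨ w = b)
    (hedge : ∀ e', e' ∈ p.edges → e' ∉ r.edges) : (p.append r).IsCycle := by
  rw [Walk.isCycle_def]
  refine ⟨⟨?_⟩, ?_, ?_⟩
  · rw [Walk.edges_append]
    exact List.Nodup.append hp.edges_nodup hr.edges_nodup hedge
  · cases p with
    | nil => exact absurd rfl hab
    | cons h q => simp [Walk.cons_append]
  · rw [Walk.tail_support_append]
    refine List.Nodup.append (hp.support_nodup.tail) (hr.support_nodup.tail) ?_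
    intro w hw1 hw2
    have hw1' : w ∈ p.support := List.mem_of_mem_tail hw1
    have hw2' : w ∈ r.support := List.mem_of_mem_tail hw2
    rcases hdisj w hw1' hw2' with rfl | rfl
    · have := hp.support_nodup
      rw [p.support_eq_cons] at this
      exact (List.nodup_cons.mp this).1 hw1
    · have := hr.support_nodup
      rw [r.support_eq_cons] at this
      exact (List.nodup_cons.mp this).1 hw2

private lemma mem_support_tail_of_closed {v w : V} {c : G.Walk v v} (hc : ¬ c.Nil)
    (hw : w ∈ c.support) : w ∈ c.support.tail := by
  cases c with
  | nil => simp at hc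
  | cons h q =>
    simp only [Walk.support_cons, List.tail_cons]
    rcases (by simpa using hw : w = v ∨ w ∈ q.support) with rfl | hw'
    · exact q.end_mem_support
    · exact hw'

/-- Splitting a cycle at a vertex `b ≠ a` yields two paths. -/
private lemma cycle_take_drop_path [DecidableEq V] {a b : V} {c : G.Walk a a} (hc : c.IsCycle)
    (hb : b ∈ c.support) (hba : b ≠ a) :
    (c.takeUntil b hb).IsPath ∧ (c.dropUntil b hb).IsPath := by
  have hspec := c.take_spec hb
  set t₁ := c.takeUntil b hb with ht₁
  set t₂ := c.dropUntil b hb with ht₂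
  have hsupp : c.support = t₁.support ++ t₂.support.tail := by
    rw [← hspec, Walk.support_append]
  have htail : c.support.tail = t₁.support.tail ++ t₂.support.tail := by
    rw [hsupp, t₁.support_eq_cons]; rfl
  have hnodup : (t₁.support.tail ++ t₂.support.tail).Nodup := htail ▸ hc.support_nodup
  have ht₁nd := (List.nodup_append.mp hnodup).1
  have ht₂nd := (List.nodup_append.mp hnodup).2.1
  have hdisj := (List.nodup_append.mp hnodup).2.2
  have ht₁nn : ¬ t₁.Nil := Walk.not_nil_of_ne (Ne.symm hba)
  have ht₂nn : ¬ t₂.Nil := Walk.not_nil_of_ne hba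
  have hbmem : b ∈ t₁.support.tail := end_mem_support_tail t₁ ht₁nn
  have hamem : a ∈ t₂.support.tail := end_mem_support_tail t₂ ht₂nn
  constructor
  · apply Walk.IsPath.mk'
    rw [t₁.support_eq_cons, List.nodup_cons]
    exact ⟨fun hmem => hdisj _ hmem _ hamem rfl, ht₁nd⟩
  · apply Walk.IsPath.mk'
    rw [t₂.support_eq_cons, List.nodup_cons]
    exact ⟨fun hmem => hdisj _ hbmem _ hmem rfl, ht₂nd⟩

/-- Key lemma: cycles through `e,f` and `f,g` yield a cycle through `e` and `g`. -/
private lemma exists_cycle_of_chain {v w x y c₁ c₂ : V} {C : G.Walk v v} {D : G.Walk w w}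
    (hC : C.IsCycle) (hD : D.IsCycle) {e : Sym2 V}
    (heC : e ∈ C.edges) (hfC : s(c₁, c₂) ∈ C.edges) (hfD : s(c₁, c₂) ∈ D.edges)
    (hgD : s(x, y) ∈ D.edges) :
    ∃ (u : V) (Z : G.Walk u u), Z.IsCycle ∧ e ∈ Z.edges ∧ s(x, y) ∈ Z.edges := by
  classical
  by_cases hgC : s(x, y) ∈ C.edges
  · exact ⟨v, C, hC, heC, hgC⟩
  obtain ⟨q, hq, hgq, hqmem⟩ := cycle_split D hD hgD
  have hfg : s(c₁, c₂) ≠ s(x, y) := fun hEq => hgC (hEq ▸ hfC)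
  have hfq : s(c₁, c₂) ∈ q.edges := ((hqmem _).mp hfD).resolve_left hfg
  have hadjf : G.Adj c₁ c₂ := q.adj_of_mem_edges hfq
  have hc₁q : c₁ ∈ q.support := q.fst_mem_support_of_mem_edges hfq
  have hc₂q : c₂ ∈ q.support := q.snd_mem_support_of_mem_edges hfq
  have hc₁C : c₁ ∈ C.support := C.fst_mem_support_of_mem_edges hfC
  have hc₂C : c₂ ∈ C.support := C.snd_mem_support_of_mem_edges hfC
  set S : Set V := {z | z ∈ C.support} with hS
  obtain ⟨a, r₁, r₂, haS, hqeq, hr₁⟩ := exists_first_hit S q ⟨c₁, hc₁q, hc₁C⟩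
  obtain ⟨b, s₁, s₂, hbS, hreq, hs₁⟩ := exists_first_hit S r₂.reverse ⟨a, by simp, haS⟩
  have hr₁p : r₁.IsPath := by rw [hqeq] at hq; exact hq.of_append_left
  have hr₂p : r₂.IsPath := by rw [hqeq] at hq; exact hq.of_append_right
  have hs₁p : s₁.IsPath := by
    have h2 := hr₂p.reverse; rw [hreq] at h2; exact h2.of_append_left
  have hab : a ≠ b := by
    intro hEq
    have hall : ∀ z ∈ q.support, z ∈ S → z = a := by
      intro z hz hzS
      rw [hqeq, Walk.mem_support_append_iff] at hz
      rcases hz with hz | hz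
      · exact hr₁ z hz hzS
      · have hz' : z ∈ r₂.reverse.support := by
          rwa [Walk.support_reverse, List.mem_reverse]
        rw [hreq, Walk.mem_support_append_iff] at hz'
        rcases hz' with hz' | hz'
        · exact (hs₁ z hz' hzS).trans hEq.symm
        · have hs₂p : s₂.IsPath := by
            have h2 := hr₂p.reverse; rw [hreq] at h2; exact h2.of_append_right
          have hnil : s₂.copy rfl hEq = Walk.nil :=
            Walk.isPath_iff_eq_nil.mp (by rwa [Walk.isPath_copy])
          have hsupp : s₂.support = [b] := by
            have h2 := congrArg Walk.support hnil
            rwa [Walk.support_copy, Walk.support_nil] at h2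
          have hz'' : z ∈ s₂.support := hz'
          rw [hsupp, List.mem_singleton] at hz''
          exact hz''.trans hEq.symm
    exact hadjf.ne ((hall c₁ hc₁q hc₁C).trans (hall c₂ hc₂q hc₂C).symm)
  have hsep : ∀ z, z ∈ r₁.support → z ∈ s₁.support → False := by
    intro z hz1 hz2
    have hz2' : z ∈ r₂.support := by
      have h2 : z ∈ r₂.reverse.support := by
        rw [hreq, Walk.mem_support_append_iff]; exact .inl hz2
      rwa [Walk.support_reverse, List.mem_reverse] at h2
    rw [r₂.support_eq_cons, List.mem_cons] at hz2'
    rcases hz2' with rfl | hz2'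
    · exact hab (hs₁ _ hz2 haS)
    · have h2 := hq.support_nodup
      rw [hqeq, Walk.support_append] at h2
      exact (List.disjoint_of_nodup_append h2) hz1 hz2'
  have hadjg : G.Adj x y := D.adj_of_mem_edges hgD
  set P : G.Walk a b := r₁.reverse.append (Walk.cons hadjg.symm s₁) with hP
  have hPsupp : ∀ z ∈ P.support, z ∈ r₁.support ∨ z ∈ s₁.support := by
    intro z hz
    rw [hP, Walk.mem_support_append_iff] at hz
    rcases hz with hz | hz
    · left; rwa [Walk.support_reverse, List.mem_reverse] at hz
    · rcases (by simpa using hz : z = y ∨ z ∈ s₁.support) with rfl | hz'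
      · left; exact r₁.start_mem_support
      · right; exact hz'
  have hPpath : P.IsPath := by
    apply Walk.IsPath.mk'
    have h2 : P.support = r₁.reverse.support ++ s₁.support := by
      rw [hP, Walk.support_append, Walk.support_cons, List.tail_cons]
    rw [h2, Walk.support_reverse]
    exact List.Nodup.append (by simpa using hr₁p.support_nodup) hs₁p.support_nodup
      (fun z hz1 hz2 => hsep z (by simpa using hz1) hz2)
  have hgP : s(x, y) ∈ P.edges := by
    rw [hP]
    simp only [Walk.edges_append, Walk.edges_cons, List.mem_append, List.mem_cons]
    right; left; exact Sym2.eq_swap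
  have hPS : ∀ z ∈ P.support, z ∈ S → z = a ∨ z = b := by
    intro z hz hzS
    rcases hPsupp z hz with hz' | hz'
    · exact .inl (hr₁ z hz' hzS)
    · exact .inr (hs₁ z hz' hzS)
  have haC : a ∈ C.support := haS
  set C₂ := C.rotate a haC with hC₂
  have hC₂cyc : C₂.IsCycle := hC.rotate haC
  have hrotmem : ∀ e', e' ∈ C₂.edges ↔ e' ∈ C.edges := fun e' =>
    (C.rotate_edges a haC).mem_iff
  have hrotsupp : ∀ z, z ∈ C₂.support → z ∈ C.support := by
    intro z hz
    rw [C₂.support_eq_cons, List.mem_cons] at hz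
    rcases hz with rfl | hz
    · exact haC
    · exact List.mem_of_mem_tail (((C.support_rotate a haC).mem_iff).mp hz)
  have hbC₂ : b ∈ C₂.support := by
    have hb' : b ∈ C.support.tail := mem_support_tail_of_closed hC.not_nil hbS
    exact List.mem_of_mem_tail (((C.support_rotate a haC).mem_iff).mpr hb')
  obtain ⟨ht₁p, ht₂p⟩ := cycle_take_drop_path hC₂cyc hbC₂ (Ne.symm hab)
  set t₁ := C₂.takeUntil b hbC₂ with ht₁
  set t₂ := C₂.dropUntil b hbC₂ with ht₂
  have hspec := C₂.take_spec hbC₂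
  have heC₂ : e ∈ C₂.edges := (hrotmem e).mpr heC
  have hesplit : e ∈ t₁.edges ∨ e ∈ t₂.edges := by
    rw [← hspec, Walk.edges_append, List.mem_append] at heC₂; exact heC₂
  have hPC : ∀ e', e' ∈ P.edges → e' ∉ C.edges := by
    intro e' he'P he'C
    obtain ⟨w₁, w₂, rfl⟩ := sym2_pair e'
    have hw₁ : w₁ ∈ P.support := P.fst_mem_support_of_mem_edges he'P
    have hw₂ : w₂ ∈ P.support := P.snd_mem_support_of_mem_edges he'P
    have hw₁S : w₁ ∈ S := C.fst_mem_support_of_mem_edges he'C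
    have hw₂S : w₂ ∈ S := C.snd_mem_support_of_mem_edges he'C
    have hne : w₁ ≠ w₂ := (P.adj_of_mem_edges he'P).ne
    have hEq : s(w₁, w₂) = s(a, b) := by
      rcases hPS w₁ hw₁ hw₁S with rfl | rfl <;> rcases hPS w₂ hw₂ hw₂S with rfl | rfl
      · exact absurd rfl hne
      · rfl
      · exact Sym2.eq_swap
      · exact absurd rfl hne
    rw [hEq] at he'P he'C
    obtain ⟨hadj', hPeq⟩ := path_eq_single_edge P hPpath he'P
    rw [hPeq] at hgP
    simp only [Walk.edges_cons, Walk.edges_nil, List.mem_singleton,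
      List.mem_cons, List.not_mem_nil, or_false] at hgP
    exact hgC (hgP ▸ he'C)
  rcases hesplit with he' | he'
  · refine ⟨a, t₁.append P.reverse, ?_, ?_, ?_⟩
    · apply glue_cycle ht₁p hPpath.reverse hab
      · intro z hz1 hz2
        have hz1' : z ∈ C₂.support := Walk.support_takeUntil_subset _ _ hz1
        have hzS : z ∈ S := hrotsupp z hz1'
        have hz2' : z ∈ P.support := by
          rwa [Walk.support_reverse, List.mem_reverse] at hz2
        exact hPS z hz2' hzS
      · intro e'' he''1 he''2
        have h1 : e'' ∈ C.edges := (hrotmem _).mp (Walk.edges_takeUntil_subset _ _ he''1)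
        have h2 : e'' ∈ P.edges := by
          rwa [Walk.edges_reverse, List.mem_reverse] at he''2
        exact hPC e'' h2 h1
    · rw [Walk.edges_append, List.mem_append]; exact .inl he'
    · rw [Walk.edges_append, List.mem_append, Walk.edges_reverse, List.mem_reverse]
      exact .inr hgP
  · refine ⟨a, P.append t₂, ?_, ?_, ?_⟩
    · apply glue_cycle hPpath ht₂p hab
      · intro z hz1 hz2
        have hz2' : z ∈ C₂.support := Walk.support_dropUntil_subset _ _ hz2
        exact hPS z hz1 (hrotsupp z hz2')
      · intro e'' he''1 he''2
        exact hPC e'' he''1 ((hrotmem _).mp (Walk.edges_dropUntil_subset _ _ he''2))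
    · rw [Walk.edges_append, List.mem_append]; exact .inr he'
    · rw [Walk.edges_append, List.mem_append]; exact .inl hgP


private lemma edgeRel_symm {e₁ e₂ : Sym2 V} (h : EdgeRel G e₁ e₂) : EdgeRel G e₂ e₁ := by
  rcases h with rfl | ⟨v, c, hc, h1, h2⟩
  · exact .inl rfl
  · exact .inr ⟨v, c, hc, h2, h1⟩

private lemma edgeRel_trans {e₁ e₂ e₃ : Sym2 V} (h12 : EdgeRel G e₁ e₂)
    (h23 : EdgeRel G e₂ e₃) : EdgeRel G e₁ e₃ := by
  rcases h12 with rfl | ⟨v, C, hC, h1C, h2C⟩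
  · exact h23
  rcases h23 with rfl | ⟨w, D, hD, h2D, h3D⟩
  · exact .inr ⟨v, C, hC, h1C, h2C⟩
  obtain ⟨c₁, c₂, rfl⟩ := sym2_pair e₂
  obtain ⟨x, y, rfl⟩ := sym2_pair e₃
  obtain ⟨u, Z, hZ, h1, h2⟩ := exists_cycle_of_chain hC hD h1C h2C h2D h3D
  exact .inr ⟨u, Z, hZ, h1, h2⟩

private lemma edgeRel_map (φ : G ≃g G) {e₁ e₂ : Sym2 V} (h : EdgeRel G e₁ e₂) :
    EdgeRel G (Sym2.map ⇑φ e₁) (Sym2.map ⇑φ e₂) := by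
  rcases h with rfl | ⟨v, c, hc, h1, h2⟩
  · exact .inl rfl
  · refine .inr ⟨φ v, c.map φ.toHom, hc.map φ.injective, ?_, ?_⟩
    · rw [Walk.edges_map]; exact List.mem_map_of_mem h1
    · rw [Walk.edges_map]; exact List.mem_map_of_mem h2

private lemma edgeSet_map' (φ : G ≃g G) {f : Sym2 V} (hf : f ∈ G.edgeSet) :
    Sym2.map ⇑φ f ∈ G.edgeSet := by
  obtain ⟨u, v, rfl⟩ := sym2_pair f
  rw [Sym2.map_pair_eq, mem_edgeSet] at *
  exact φ.map_rel_iff.mpr hf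

private lemma lobe_map_mem (φ : G ≃g G) {e A : Sym2 V} (hA : A ∈ lobeEdges G e)
    (hB : Sym2.map ⇑φ A ∈ lobeEdges G e) {f : Sym2 V} (hf : f ∈ lobeEdges G e) :
    Sym2.map ⇑φ f ∈ lobeEdges G e := by
  refine ⟨edgeSet_map' φ hf.1, ?_⟩
  exact edgeRel_trans hB.2 (edgeRel_map φ (edgeRel_trans (edgeRel_symm hA.2) hf.2))

end Aux

theorem stmt_7 {V : Type*} (G : SimpleGraph V) (hG : G.Connected)
    (hE : G.edgeSet.Nonempty) (h : ArcTransitive G) :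
    ∀ e ∈ G.edgeSet, ArcTransitive (lobeSubgraph G e).coe := by
  intro e he u₁ v₁ u₂ v₂ hadj₁ hadj₂
  obtain ⟨hG₁, hrel₁⟩ : G.Adj ↑u₁ ↑v₁ ∧ EdgeRel G e s(↑u₁, ↑v₁) := hadj₁
  obtain ⟨hG₂, hrel₂⟩ : G.Adj ↑u₂ ↑v₂ ∧ EdgeRel G e s(↑u₂, ↑v₂) := hadj₂
  obtain ⟨φ, hu, hv⟩ := h ↑u₁ ↑v₁ ↑u₂ ↑v₂ hG₁ hG₂
  have hA : s((u₁ : V), ↑v₁) ∈ lobeEdges G e := ⟨G.mem_edgeSet.mpr hG₁, hrel₁⟩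
  have hB : s((u₂ : V), ↑v₂) ∈ lobeEdges G e := ⟨G.mem_edgeSet.mpr hG₂, hrel₂⟩
  have hmapA : Sym2.map ⇑φ s((u₁ : V), ↑v₁) = s((u₂ : V), ↑v₂) := by
    rw [Sym2.map_pair_eq, hu, hv]
  have hfwd : ∀ f ∈ lobeEdges G e, Sym2.map ⇑φ f ∈ lobeEdges G e :=
    fun f hf => lobe_map_mem φ hA (hmapA ▸ hB) hf
  have hmapB : Sym2.map ⇑φ.symm s((u₂ : V), ↑v₂) = s((u₁ : V), ↑v₁) := by
    rw [Sym2.map_pair_eq, ← hu, ← hv, φ.symm_apply_apply, φ.symm_apply_apply]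
  have hbwd : ∀ f ∈ lobeEdges G e, Sym2.map ⇑φ.symm f ∈ lobeEdges G e :=
    fun f hf => lobe_map_mem φ.symm hB (hmapB ▸ hA) hf
  have hvertfwd : ∀ z : V, z ∈ (lobeSubgraph G e).verts → φ z ∈ (lobeSubgraph G e).verts := by
    rintro z ⟨f, hf, hzf⟩
    exact ⟨Sym2.map ⇑φ f, hfwd f hf, Sym2.mem_map.mpr ⟨z, hzf, rfl⟩⟩
  have hvertbwd : ∀ z : V, z ∈ (lobeSubgraph G e).verts →
      φ.symm z ∈ (lobeSubgraph G e).verts := by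
    rintro z ⟨f, hf, hzf⟩
    exact ⟨Sym2.map ⇑φ.symm f, hbwd f hf, Sym2.mem_map.mpr ⟨z, hzf, rfl⟩⟩
  let ψ : ↥(lobeSubgraph G e).verts ≃ ↥(lobeSubgraph G e).verts :=
    { toFun := fun z => ⟨φ z, hvertfwd z z.2⟩
      invFun := fun z => ⟨φ.symm z, hvertbwd z z.2⟩
      left_inv := fun z => Subtype.ext (φ.symm_apply_apply z)
      right_inv := fun z => Subtype.ext (φ.apply_symm_apply z) }
  refine ⟨⟨ψ, ?_⟩, Subtype.ext hu, Subtype.ext hv⟩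
  intro a b
  show ((lobeSubgraph G e).Adj (φ ↑a) (φ ↑b)) ↔ ((lobeSubgraph G e).Adj ↑a ↑b)
  constructor
  · rintro ⟨h1, h2⟩
    have hmem : s(φ (a : V), φ ↑b) ∈ lobeEdges G e := ⟨G.mem_edgeSet.mpr h1, h2⟩
    have h3 := hbwd _ hmem
    rw [Sym2.map_pair_eq, φ.symm_apply_apply, φ.symm_apply_apply] at h3
    exact ⟨φ.map_rel_iff.mp h1, h3.2⟩
  · rintro ⟨h1, h2⟩
    have hmem : s((a : V), ↑b) ∈ lobeEdges G e := ⟨G.mem_edgeSet.mpr h1, h2⟩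
    have h3 := hfwd _ hmem
    rw [Sym2.map_pair_eq] at h3
    exact ⟨φ.map_rel_iff.mpr h1, h3.2⟩
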